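/- Let (E_i, A_i, δ_i, □_i, P_i) be as in the standing setting, and assume only that A_{i+1}∘A_i = 0 for all i ∈ ℤ (the maps δ_i are arbitrary). Then □_i restricts to a bijection of ker(P_i); let T_i : E_i → E_i be the linear map that vanishes on im(P_i) and on ker(P_i) equals the inverse of this restriction (so T_i∘P_i = P_i∘T_i = 0 and T_i∘□_i = □_i∘T_i = id − P_i). Then for all i: P_{i+1}∘A_i = A_i∘P_i (so the projections P_i form a chain map of the complex (E_i, A_i)), and with h_i := δ_i∘T_i∘(id − P_i) : E_i → E_{i-1} one has id_{E_i} − P_i = A_{i-1}∘h_i + h_{i+1}∘A_i. Consequently the inclusion of the subcomplex (im(P_i), A_i|_{im(P_i)}) induces an isomorphism (ker(A_i) ∩ im(P_i)) / A_{i-1}(im(P_{i-1})) ≅ ker(A_i) / im(A_{i-1}) for every i. -/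

import Mathlib

/-- `P` is the spectral projection of `B` onto the generalized zero eigenspace, i.e. the
projection onto the generalized eigenspace for the eigenvalue `0` along the sum of the generalized
eigenspaces for the nonzero eigenvalues. -/
def IsGenZeroProj {V : Type*} [AddCommGroup V] [Module ℂ V] (B P : V →ₗ[ℂ] V) : Prop :=
  (∀ v ∈ Module.End.maxGenEigenspace B 0, P v = v) ∧
  (∀ μ : ℂ, μ ≠ 0 → ∀ v ∈ Module.End.maxGenEigenspace B μ, P v = 0)

section Aux

variable {V W : Type*} [AddCommGroup V] [Module ℂ V] [AddCommGroup W] [Module ℂ W]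

/-- the sum of the generalized eigenspaces for nonzero eigenvalues -/
def NZ (B : V →ₗ[ℂ] V) : Submodule ℂ V :=
  ⨆ μ : {μ : ℂ // μ ≠ 0}, Module.End.maxGenEigenspace B (μ : ℂ)

theorem mapsTo_maxGen (B : V →ₗ[ℂ] V) (B' : W →ₗ[ℂ] W) (C : V →ₗ[ℂ] W)
    (hC : ∀ v, B' (C v) = C (B v)) (μ : ℂ) (v : V)
    (hv : v ∈ Module.End.maxGenEigenspace B μ) :
    C v ∈ Module.End.maxGenEigenspace B' μ := by
  rw [Module.End.mem_maxGenEigenspace] at hv ⊢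
  obtain ⟨k, hk⟩ := hv
  refine ⟨k, ?_⟩
  have key : ∀ (n : ℕ) (w : V),
      ((B' - μ • (1 : Module.End ℂ W)) ^ n) (C w)
        = C (((B - μ • (1 : Module.End ℂ V)) ^ n) w) := by
    intro n
    induction n with
    | zero => intro w; simp
    | succ n ih =>
      intro w
      rw [pow_succ, pow_succ, Module.End.mul_apply, Module.End.mul_apply]
      have hstep : (B' - μ • (1 : Module.End ℂ W)) (C w)
          = C ((B - μ • (1 : Module.End ℂ V)) w) := by
        simp [LinearMap.sub_apply, hC w, map_sub, map_smul]
      rw [hstep, ih]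
  rw [key, hk, map_zero]

theorem comp_zero_on_NZ (B : V →ₗ[ℂ] V) (B' : W →ₗ[ℂ] W) (C : V →ₗ[ℂ] W) (P' : W →ₗ[ℂ] W)
    (hC : ∀ v, B' (C v) = C (B v)) (hP' : IsGenZeroProj B' P') :
    ∀ v ∈ NZ B, P' (C v) = 0 := by
  intro v hv
  refine Submodule.iSup_induction (motive := fun v => P' (C v) = 0) _ hv ?_ ?_ ?_
  · rintro ⟨μ, hμ⟩ x hx
    exact hP'.2 μ hμ _ (mapsTo_maxGen B B' C hC μ x hx)
  · simp
  · intro x y hx hy; rw [map_add, map_add, hx, hy, add_zero]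

theorem decomp (B P : V →ₗ[ℂ] V) [FiniteDimensional ℂ V] (hP : IsGenZeroProj B P) (v : V) :
    P v ∈ Module.End.maxGenEigenspace B 0 ∧ v - P v ∈ NZ B := by
  have hPNZ : ∀ w ∈ NZ B, P w = 0 := by
    intro w hw
    simpa using comp_zero_on_NZ B B LinearMap.id P (fun _ => rfl) hP w hw
  have htop : Module.End.maxGenEigenspace B 0 ⊔ NZ B = ⊤ := by
    rw [eq_top_iff, ← Module.End.iSup_maxGenEigenspace_eq_top B]
    refine iSup_le fun μ => ?_
    by_cases h : μ = 0
    · subst h; exact le_sup_left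
    · exact le_sup_of_le_right
        (le_iSup (fun μ : {μ : ℂ // μ ≠ 0} => Module.End.maxGenEigenspace B (μ : ℂ)) ⟨μ, h⟩)
  obtain ⟨v₀, h0, w, hw, hvw⟩ := Submodule.mem_sup.mp (htop ▸ Submodule.mem_top (x := v))
  have hPv : P v = v₀ := by rw [← hvw, map_add, hP.1 v₀ h0, hPNZ w hw, add_zero]
  refine ⟨hPv ▸ h0, ?_⟩
  rw [hPv, ← hvw, add_sub_cancel_left]
  exact hw

theorem proj_comm (B P : V →ₗ[ℂ] V) (B' P' : W →ₗ[ℂ] W) [FiniteDimensional ℂ V]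
    (hP : IsGenZeroProj B P) (hP' : IsGenZeroProj B' P') (C : V →ₗ[ℂ] W)
    (hC : ∀ v, B' (C v) = C (B v)) (v : V) : P' (C v) = C (P v) := by
  obtain ⟨h0, hN⟩ := decomp B P hP v
  have h1 : P' (C (v - P v)) = 0 := comp_zero_on_NZ B B' C P' hC hP' _ hN
  have h2 : P' (C (P v)) = C (P v) := hP'.1 _ (mapsTo_maxGen B B' C hC 0 _ h0)
  have h3 : P v + (v - P v) = v := by abel
  calc P' (C v) = P' (C (P v + (v - P v))) := by rw [h3]
    _ = P' (C (P v)) + P' (C (v - P v)) := by rw [map_add, map_add]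
    _ = C (P v) := by rw [h1, h2, add_zero]

theorem PB_comm (B P : V →ₗ[ℂ] V) [FiniteDimensional ℂ V] (hP : IsGenZeroProj B P) (v : V) :
    P (B v) = B (P v) :=
  proj_comm B P B P hP hP B (fun _ => rfl) v

theorem P_idem (B P : V →ₗ[ℂ] V) [FiniteDimensional ℂ V] (hP : IsGenZeroProj B P) (v : V) :
    P (P v) = P v :=
  hP.1 _ (decomp B P hP v).1

theorem eq_zero_of_mem_ker (B P : V →ₗ[ℂ] V) [FiniteDimensional ℂ V] (hP : IsGenZeroProj B P) :
    ∀ v ∈ LinearMap.ker P, B v = 0 → v = 0 := by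
  intro v hv hBv
  have hvNZ : v ∈ NZ B := by
    have h := (decomp B P hP v).2
    rwa [LinearMap.mem_ker.mp hv, sub_zero] at h
  have hv0 : v ∈ Module.End.maxGenEigenspace B 0 := by
    rw [Module.End.mem_maxGenEigenspace]
    exact ⟨1, by simp [pow_one, hBv]⟩
  have hdisj : Disjoint (Module.End.maxGenEigenspace B 0) (NZ B) := by
    have h := (Module.End.independent_maxGenEigenspace B).disjoint_biSup
      (x := (0 : ℂ)) (y := {μ : ℂ | μ ≠ 0}) (by simp)
    refine h.mono_right ?_
    refine iSup_le fun μ => ?_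
    exact le_iSup_of_le (μ : ℂ) (le_iSup_of_le μ.2 le_rfl)
  exact (Submodule.disjoint_def.mp hdisj) v hv0 hvNZ

theorem restrict_bij (B P : V →ₗ[ℂ] V) [FiniteDimensional ℂ V] (hP : IsGenZeroProj B P)
    (hres : ∀ v ∈ LinearMap.ker P, B v ∈ LinearMap.ker P) :
    Function.Bijective (B.restrict hres) := by
  have hinj : Function.Injective (B.restrict hres) := by
    intro x y hxy
    apply Subtype.ext
    have hBxy : B (x : V) = B (y : V) := by
      have h := congrArg Subtype.val hxy
      simpa [LinearMap.restrict_apply] using h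
    have h0 : B ((x : V) - (y : V)) = 0 := by rw [map_sub, hBxy, sub_self]
    have h := eq_zero_of_mem_ker B P hP _ (sub_mem x.2 y.2) h0
    exact sub_eq_zero.mp h
  exact ⟨hinj, LinearMap.injective_iff_surjective.mp hinj⟩

theorem exists_T (B P : V →ₗ[ℂ] V) [FiniteDimensional ℂ V] (hP : IsGenZeroProj B P) :
    ∃ T : V →ₗ[ℂ] V, T ∘ₗ P = 0 ∧ P ∘ₗ T = 0 ∧
      T ∘ₗ B = LinearMap.id - P ∧ B ∘ₗ T = LinearMap.id - P := by
  have hcomm := PB_comm B P hP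
  have hidem := P_idem B P hP
  have hres : ∀ v ∈ LinearMap.ker P, B v ∈ LinearMap.ker P := by
    intro v hv
    rw [LinearMap.mem_ker] at hv ⊢
    rw [hcomm, hv, map_zero]
  set e := B.restrict hres with he
  have hbij : Function.Bijective e := restrict_bij B P hP hres
  let eqv := LinearEquiv.ofBijective e hbij
  have hsub : ∀ v : V, ((LinearMap.id - P : V →ₗ[ℂ] V)) v ∈ LinearMap.ker P := by
    intro v
    rw [LinearMap.mem_ker]
    simp [map_sub, hidem v]
  refine ⟨(LinearMap.ker P).subtype ∘ₗ (eqv.symm : LinearMap.ker P →ₗ[ℂ] LinearMap.ker P)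
      ∘ₗ LinearMap.codRestrict (LinearMap.ker P) (LinearMap.id - P) hsub, ?_, ?_, ?_, ?_⟩
  · ext v
    have harg : (⟨((LinearMap.id - P : V →ₗ[ℂ] V)) (P v), hsub (P v)⟩ : LinearMap.ker P) = 0 := by
      apply Subtype.ext
      simp [hidem v]
    simp only [LinearMap.comp_apply, LinearMap.codRestrict_apply, LinearMap.zero_apply]
    rw [show (LinearMap.codRestrict (LinearMap.ker P) (LinearMap.id - P) hsub) (P v)
        = (0 : LinearMap.ker P) from harg]
    simp
  · ext v
    simp only [LinearMap.comp_apply, LinearMap.zero_apply]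
    exact (eqv.symm _).2
  · ext v
    simp only [LinearMap.comp_apply, Submodule.subtype_apply, LinearEquiv.coe_coe,
      LinearMap.sub_apply, LinearMap.id_apply]
    set x : LinearMap.ker P :=
      (LinearMap.codRestrict (LinearMap.ker P) (LinearMap.id - P) hsub) v with hx
    have key : (LinearMap.codRestrict (LinearMap.ker P) (LinearMap.id - P) hsub) (B v)
        = e x := by
      apply Subtype.ext
      show ((LinearMap.id - P : V →ₗ[ℂ] V)) (B v) = B (↑x)
      have hxv : (↑x : V) = v - P v := rfl
      rw [hxv]
      simp [map_sub, hcomm v]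
    rw [key]
    have h2 : e x = eqv x := rfl
    rw [h2, eqv.symm_apply_apply]
    rfl
  · ext v
    simp only [LinearMap.comp_apply, Submodule.subtype_apply, LinearEquiv.coe_coe,
      LinearMap.sub_apply, LinearMap.id_apply]
    set x : LinearMap.ker P :=
      (LinearMap.codRestrict (LinearMap.ker P) (LinearMap.id - P) hsub) v with hx
    have hBcoe : ∀ y : LinearMap.ker P, B (y : V) = ((e y : LinearMap.ker P) : V) :=
      fun y => rfl
    calc B ((eqv.symm x : LinearMap.ker P) : V)
        = ((e (eqv.symm x) : LinearMap.ker P) : V) := hBcoe _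
      _ = ((eqv (eqv.symm x) : LinearMap.ker P) : V) := rfl
      _ = (x : V) := by rw [eqv.apply_symm_apply]
      _ = v - P v := rfl

end Aux

/-- The operator `□_{i+1} = A_i ∘ δ_{i+1} + δ_{i+2} ∘ A_{i+1} : E_{i+1} → E_{i+1}` of the standing
setting.  Here `A i : E i → E (i+1)` is the `i`-th operator of the sequence and
`δ i : E (i+1) → E i` denotes the codifferential `δ_{i+1}` of the paper. -/
noncomputable def Box (E : ℤ → Type*) [∀ i, AddCommGroup (E i)] [∀ i, Module ℂ (E i)]
    (A : ∀ i : ℤ, E i →ₗ[ℂ] E (i + 1)) (δ : ∀ i : ℤ, E (i + 1) →ₗ[ℂ] E i) (i : ℤ) :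
    E (i + 1) →ₗ[ℂ] E (i + 1) :=
  A i ∘ₗ δ i + δ (i + 1) ∘ₗ A (i + 1)

/-- In the standing setting, assume only `A_{i+1}∘A_i = 0` for all `i` (the maps
`δ_i` are arbitrary).  Then `□_i` restricts to a bijection of `ker(P_i)`; letting `T_i` be the
linear map vanishing on `im(P_i)` and equal to the inverse of this restriction on `ker(P_i)`
(equivalently, `T_i∘P_i = P_i∘T_i = 0` and `T_i∘□_i = □_i∘T_i = id − P_i`), one has, for all `i`,
`P_{i+1}∘A_i = A_i∘P_i`, and, with `h_i := δ_i∘T_i∘(id − P_i)`,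
`id − P_i = A_{i-1}∘h_i + h_{i+1}∘A_i`.  Consequently the inclusion of the subcomplex
`(im(P_i), A_i)` induces an isomorphism
`(ker(A_i) ∩ im(P_i)) / A_{i-1}(im(P_{i-1})) ≅ ker(A_i)/im(A_{i-1})` for every `i`; the latter is
expressed elementwise as bijectivity of the induced map on cohomology classes.

(Indexing: the statement for all `i ∈ ℤ` is expressed by quantifying over `k ∈ ℤ`, with
`E_{k+1} = E (k+1)`, `A_{k+1} = A (k+1)`, `δ_{k+1} = δ k`, `□_{k+1} = Box E A δ k`,
`P_{k+1} = P k`, `T_{k+1} = T k`, `h_{k+1} = δ k ∘ T k ∘ (id − P k)`.) -/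
theorem statement6 (E : ℤ → Type*) [∀ i, AddCommGroup (E i)] [∀ i, Module ℂ (E i)]
    [∀ i, FiniteDimensional ℂ (E i)]
    (A : ∀ i : ℤ, E i →ₗ[ℂ] E (i + 1)) (δ : ∀ i : ℤ, E (i + 1) →ₗ[ℂ] E i)
    (P : ∀ i : ℤ, E (i + 1) →ₗ[ℂ] E (i + 1))
    (hP : ∀ i : ℤ, IsGenZeroProj (Box E A δ i) (P i))
    (hAA : ∀ i : ℤ, A (i + 1) ∘ₗ A i = 0) :
    -- `□_i` restricts to a bijection of `ker(P_i)`
    (∀ i : ℤ, ∃ hres : ∀ v ∈ LinearMap.ker (P i), Box E A δ i v ∈ LinearMap.ker (P i),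
        Function.Bijective ((Box E A δ i).restrict hres)) ∧
    -- the projections form a chain map
    (∀ k : ℤ, P (k + 1) ∘ₗ A (k + 1) = A (k + 1) ∘ₗ P k) ∧
    -- the homotopy formula, for the map `T` characterized in the statement
    (∀ T : ∀ i : ℤ, E (i + 1) →ₗ[ℂ] E (i + 1),
      (∀ i : ℤ, T i ∘ₗ P i = 0 ∧ P i ∘ₗ T i = 0 ∧
        T i ∘ₗ Box E A δ i = LinearMap.id - P i ∧
        Box E A δ i ∘ₗ T i = LinearMap.id - P i) →
      ∀ k : ℤ,
        LinearMap.id - P k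
          = A k ∘ₗ (δ k ∘ₗ T k ∘ₗ (LinearMap.id - P k))
            + (δ (k + 1) ∘ₗ T (k + 1) ∘ₗ (LinearMap.id - P (k + 1))) ∘ₗ A (k + 1)) ∧
    -- the inclusion of the subcomplex induces an isomorphism in cohomology (elementwise)
    (∀ k : ℤ,
      (∀ x : E (k + 1 + 1), A (k + 1 + 1) x = 0 →
        ∃ y : E (k + 1 + 1), y ∈ LinearMap.range (P (k + 1)) ∧ A (k + 1 + 1) y = 0 ∧
          x - y ∈ LinearMap.range (A (k + 1))) ∧
      (∀ y ∈ LinearMap.range (P (k + 1)), A (k + 1 + 1) y = 0 →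
        y ∈ LinearMap.range (A (k + 1)) →
        ∃ z ∈ LinearMap.range (P k), A (k + 1) z = y)) := by
  classical
  have boxApply : ∀ (i : ℤ) (v : E (i + 1)),
      Box E A δ i v = A i (δ i v) + δ (i + 1) (A (i + 1) v) := fun i v => rfl
  have hAA' : ∀ (i : ℤ) (v : E i), A (i + 1) (A i v) = 0 := by
    intro i v
    have h := LinearMap.ext_iff.mp (hAA i) v
    simpa using h
  have inter : ∀ (k : ℤ) (v : E (k + 1)),
      Box E A δ (k + 1) (A (k + 1) v) = A (k + 1) (Box E A δ k v) := by
    intro k v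
    rw [boxApply, boxApply, hAA' (k + 1), map_zero, add_zero, map_add, hAA' k, zero_add]
  have chain : ∀ (k : ℤ) (v : E (k + 1)), P (k + 1) (A (k + 1) v) = A (k + 1) (P k v) :=
    fun k v => proj_comm (Box E A δ k) (P k) (Box E A δ (k + 1)) (P (k + 1))
      (hP k) (hP (k + 1)) (A (k + 1)) (inter k) v
  have hidem : ∀ (i : ℤ) (v : E (i + 1)), P i (P i v) = P i v :=
    fun i v => P_idem _ _ (hP i) v
  have hhom : ∀ T : ∀ i : ℤ, E (i + 1) →ₗ[ℂ] E (i + 1),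
      (∀ i : ℤ, T i ∘ₗ P i = 0 ∧ P i ∘ₗ T i = 0 ∧
        T i ∘ₗ Box E A δ i = LinearMap.id - P i ∧
        Box E A δ i ∘ₗ T i = LinearMap.id - P i) →
      ∀ k : ℤ,
        LinearMap.id - P k
          = A k ∘ₗ (δ k ∘ₗ T k ∘ₗ (LinearMap.id - P k))
            + (δ (k + 1) ∘ₗ T (k + 1) ∘ₗ (LinearMap.id - P (k + 1))) ∘ₗ A (k + 1) := by
    intro T hT k
    have hTP : ∀ (i : ℤ) (w : E (i + 1)), T i (P i w) = 0 := by
      intro i w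
      have h := LinearMap.ext_iff.mp (hT i).1 w
      simpa using h
    have hPT : ∀ (i : ℤ) (w : E (i + 1)), P i (T i w) = 0 := by
      intro i w
      have h := LinearMap.ext_iff.mp (hT i).2.1 w
      simpa using h
    have hTB : ∀ (i : ℤ) (w : E (i + 1)), T i (Box E A δ i w) = w - P i w := by
      intro i w
      have h := LinearMap.ext_iff.mp (hT i).2.2.1 w
      simpa using h
    have hBT : ∀ (i : ℤ) (w : E (i + 1)), Box E A δ i (T i w) = w - P i w := by
      intro i w
      have h := LinearMap.ext_iff.mp (hT i).2.2.2 w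
      simpa using h
    ext v
    simp only [LinearMap.sub_apply, LinearMap.add_apply, LinearMap.comp_apply,
      LinearMap.id_apply]
    have e1 : T k (v - P k v) = T k v := by rw [map_sub, hTP, sub_zero]
    have e2 : A (k + 1) v - P (k + 1) (A (k + 1) v) = A (k + 1) (v - P k v) := by
      rw [chain k, ← map_sub]
    have e3 : T (k + 1) (A (k + 1) (v - P k v)) = A (k + 1) (T k v) := by
      rw [show v - P k v = Box E A δ k (T k v) from (hBT k v).symm, ← inter k, hTB (k + 1),
        chain k, hPT, map_zero, sub_zero]
    rw [e1, e2, e3]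
    rw [show A k (δ k (T k v)) + δ (k + 1) (A (k + 1) (T k v)) = Box E A δ k (T k v) from rfl,
      hBT]
  refine ⟨?_, ?_, hhom, ?_⟩
  · intro i
    have hres : ∀ v ∈ LinearMap.ker (P i), Box E A δ i v ∈ LinearMap.ker (P i) := by
      intro v hv
      rw [LinearMap.mem_ker] at hv ⊢
      rw [PB_comm _ _ (hP i), hv, map_zero]
    exact ⟨hres, restrict_bij _ _ (hP i) hres⟩
  · intro k
    exact LinearMap.ext (chain k)
  · intro k
    choose T hT1 hT2 hT3 hT4 using fun i : ℤ => exists_T (Box E A δ i) (P i) (hP i)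
    have hT' : ∀ i : ℤ, T i ∘ₗ P i = 0 ∧ P i ∘ₗ T i = 0 ∧
        T i ∘ₗ Box E A δ i = LinearMap.id - P i ∧
        Box E A δ i ∘ₗ T i = LinearMap.id - P i := fun i => ⟨hT1 i, hT2 i, hT3 i, hT4 i⟩
    constructor
    · intro x hx
      refine ⟨P (k + 1) x, ⟨x, rfl⟩, ?_, ?_⟩
      · rw [← chain (k + 1) x, hx, map_zero]
      · have hh := LinearMap.ext_iff.mp (hhom T hT' (k + 1)) x
        simp only [LinearMap.sub_apply, LinearMap.add_apply, LinearMap.comp_apply,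
          LinearMap.id_apply, hx, map_zero, sub_zero, add_zero] at hh
        exact ⟨δ (k + 1) (T (k + 1) (x - P (k + 1) x)), hh.symm⟩
    · intro y hy hAy hrange
      obtain ⟨u, hu⟩ := hy
      obtain ⟨w, hw⟩ := hrange
      refine ⟨P k w, ⟨w, rfl⟩, ?_⟩
      calc A (k + 1) (P k w) = P (k + 1) (A (k + 1) w) := (chain k w).symm
        _ = P (k + 1) (P (k + 1) u) := by rw [hw, ← hu]
        _ = P (k + 1) u := hidem (k + 1) u
        _ = y := hu
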